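/- For an integer n ≥ 2 and integers k_1, …, k_n ≥ 3, the number of spanning trees of the hinge graph H_{k_1−1,…,k_n−1} equals ∏_{i=1}^n (k_i−1) + ∑_{i=1}^n ∏_{j≠i} (k_j−1). -/

import Mathlib

/-- Vertex set of the hinge graph `H_{k₁-1,…,kₙ-1}` with base cycles of lengths `k i`:
two shared vertices `u, w` (encoded as `Sum.inl 0`, `Sum.inl 1`) together with the vertices
`v_{i,j}` (encoded as `Sum.inr ⟨i, j⟩`, zero-indexed, `j < k i - 2`). -/
abbrev GHingeVertex (n : ℕ) (k : Fin n → ℕ) : Type := Fin 2 ⊕ (Σ i : Fin n, Fin (k i - 2))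

/-- The shared vertex `u`. -/
def gu (n : ℕ) (k : Fin n → ℕ) : GHingeVertex n k := Sum.inl 0

/-- The shared vertex `w`. -/
def gw (n : ℕ) (k : Fin n → ℕ) : GHingeVertex n k := Sum.inl 1

/-- The vertex `v_{i+1,j+1}` of the `i+1`-st cycle (zero-indexed here). -/
def gv (n : ℕ) (k : Fin n → ℕ) (i : Fin n) (j : Fin (k i - 2)) : GHingeVertex n k :=
  Sum.inr ⟨i, j⟩

/-- The base (Boolean) edge relation of the hinge graph: `u-w`, `u-v_{i,1}`,
`v_{i,j}-v_{i,j+1}`, `v_{i,k_i-2}-w`. -/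
def gHingeRelB (n : ℕ) (k : Fin n → ℕ) : GHingeVertex n k → GHingeVertex n k → Bool
  | Sum.inl a, Sum.inl b => a != b
  | Sum.inl a, Sum.inr p => a == 0 && p.2.val == 0
  | Sum.inr p, Sum.inl b => b == 1 && p.2.val == k p.1 - 3
  | Sum.inr p, Sum.inr q => p.1 == q.1 && q.2.val == p.2.val + 1

/-- The hinge graph `H_{k₁-1,…,kₙ-1}`: cycles of lengths `k 1, …, k n` glued along the
common edge `{u, w}`. -/
def GHinge (n : ℕ) (k : Fin n → ℕ) : SimpleGraph (GHingeVertex n k) :=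
  SimpleGraph.fromRel (fun x y => gHingeRelB n k x y = true)

instance (n : ℕ) (k : Fin n → ℕ) : DecidableRel (GHinge n k).Adj := fun x y =>
  inferInstanceAs (Decidable (x ≠ y ∧ (gHingeRelB n k x y = true ∨ gHingeRelB n k y x = true)))

/-- The number of spanning trees of a graph `G`: the number of edge sets `s ⊆ E(G)`
whose associated spanning subgraph (on all of `V`) is connected and acyclic. -/
noncomputable def spanningTreeCount {V : Type*} (G : SimpleGraph V) : ℕ :=
  Set.ncard {s : Set (Sym2 V) | s ⊆ G.edgeSet ∧ (SimpleGraph.fromEdgeSet s).IsTree}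

/-- The degree homomorphism on divisors. -/
def degHom (V : Type*) [Fintype V] : (V → ℤ) →+ ℤ where
  toFun D := ∑ v, D v
  map_zero' := by simp
  map_add' x y := by simp [Finset.sum_add_distrib]

/-- The group `Div⁰` of degree-zero divisors. -/
def Div0 (V : Type*) [Fintype V] : AddSubgroup (V → ℤ) := (degHom V).ker

/-- The group of principal divisors: the image of the Laplacian `L = Deg - A`. -/
def Prin {V : Type*} [Fintype V] [DecidableEq V] (G : SimpleGraph V) [DecidableRel G.Adj] :
    AddSubgroup (V → ℤ) :=
  AddMonoidHom.range (Matrix.mulVecLin (G.lapMatrix ℤ)).toAddMonoidHom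

/-- The critical group `K(G) = Div⁰(G) / Prin(G)`. -/
def CriticalGroup {V : Type*} [Fintype V] [DecidableEq V] (G : SimpleGraph V)
    [DecidableRel G.Adj] : Type _ :=
  Div0 V ⧸ ((Prin G).addSubgroupOf (Div0 V))

noncomputable instance {V : Type*} [Fintype V] [DecidableEq V] (G : SimpleGraph V)
    [DecidableRel G.Adj] : AddCommGroup (CriticalGroup G) :=
  inferInstanceAs (AddCommGroup (Div0 V ⧸ ((Prin G).addSubgroupOf (Div0 V))))

/-- The class of a degree-zero divisor in the critical group. -/
def divisorClass {V : Type*} [Fintype V] [DecidableEq V] (G : SimpleGraph V)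
    [DecidableRel G.Adj] (D : V → ℤ) (hD : D ∈ Div0 V) : CriticalGroup G :=
  (QuotientAddGroup.mk (⟨D, hD⟩ : Div0 V) :
    Div0 V ⧸ ((Prin G).addSubgroupOf (Div0 V)))

/-- The divisor with value `1` at `x`, `-1` at `y` (for `x ≠ y`) and `0` elsewhere. -/
def pointDiff {V : Type*} [DecidableEq V] (x y : V) : V → ℤ :=
  fun z => (if z = x then 1 else 0) - (if z = y then 1 else 0)

lemma pointDiff_mem {V : Type*} [Fintype V] [DecidableEq V] (x y : V) :
    pointDiff x y ∈ Div0 V := by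
  simp [Div0, AddMonoidHom.mem_ker, degHom, pointDiff, Finset.sum_sub_distrib]



/-!
The hinge graph is a theta graph: `n + 1` internally disjoint paths from `u` to `w`, of lengths
`1` (the edge `uw`) and `k i - 1`. Describe a spanning subgraph by the set `R` of deleted edges.
Deleting two edges of one path cuts off the vertices between them, so a connected spanning
subgraph loses at most one edge per path; a tree has `|V| - 1` edges, i.e. it loses exactly `n`
edges, hence exactly one edge on every path but one. Conversely every such choice leaves a
connected spanning subgraph with `|V| - 1` edges, i.e. a spanning tree. Choosing the intact path
`β` and one edge on each other path gives `∑ β ∏_{γ ≠ β} length γ` trees; `β = uw` contributes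
`∏ (k i - 1)` and `β = i` contributes `∏_{j ≠ i} (k j - 1)`.
-/

namespace SimpleGraph

variable {V : Type*} {G : SimpleGraph V} {s : Set (Sym2 V)}

lemma edgeSet_fromEdgeSet_of_subset (hs : s ⊆ G.edgeSet) : (fromEdgeSet s).edgeSet = s := by
  rw [edgeSet_fromEdgeSet, sdiff_eq_left, Set.disjoint_left]
  exact fun e he => G.not_isDiag_of_mem_edgeSet (hs he)

lemma isTree_fromEdgeSet_iff [Finite V] (hs : s ⊆ G.edgeSet) :
    (fromEdgeSet s).IsTree ↔ (fromEdgeSet s).Connected ∧ s.ncard + 1 = Nat.card V := by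
  rw [isTree_iff_connected_and_card, edgeSet_fromEdgeSet_of_subset hs, Nat.card_coe_set_eq]

lemma Reachable.mem_of_forall_adj_mem {S : Set V} (hS : ∀ x ∈ S, ∀ y, G.Adj x y → y ∈ S)
    {x y : V} (hx : x ∈ S) (h : G.Reachable x y) : y ∈ S := by
  obtain ⟨p⟩ := h
  by_contra hy
  obtain ⟨d, -, hd, hd'⟩ := p.exists_boundary_dart S hx hy
  exact hd' (hS _ hd _ d.adj)

end SimpleGraph

open SimpleGraph

section PartialChoice

variable {B : Type*} {α : B → Type*}

/-- A choice of one element in every block of `Σ b, α b` except block `t.1`. -/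
abbrev PartialChoice (α : B → Type*) : Type _ := Σ β : B, ∀ γ : {γ // γ ≠ β}, α γ

namespace PartialChoice

def toSet (t : PartialChoice α) : Set (Σ b, α b) :=
  Set.range fun γ : {γ // γ ≠ t.1} => (⟨γ, t.2 γ⟩ : Σ b, α b)

lemma mk_mem_toSet {t : PartialChoice α} {γ : B} {a : α γ} :
    ⟨γ, a⟩ ∈ t.toSet ↔ ∃ h : γ ≠ t.1, t.2 ⟨γ, h⟩ = a := by
  constructor
  · rintro ⟨⟨γ', h⟩, he⟩
    obtain ⟨rfl, he⟩ := Sigma.mk.inj_iff.mp he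
    exact ⟨h, eq_of_heq he⟩
  · rintro ⟨h, rfl⟩
    exact ⟨⟨γ, h⟩, rfl⟩

lemma toSet_injective : Function.Injective (toSet : PartialChoice α → _) := by
  rintro ⟨β, m⟩ ⟨β', m'⟩ h
  obtain rfl : β = β' := by
    by_contra hne
    have hmem : ⟨β', m ⟨β', Ne.symm hne⟩⟩ ∈ toSet ⟨β', m'⟩ :=
      h ▸ mk_mem_toSet.mpr ⟨Ne.symm hne, rfl⟩
    exact (mk_mem_toSet.mp hmem).1 rfl
  obtain rfl : m = m' := by
    funext γ
    have hmem : ⟨γ.1, m γ⟩ ∈ toSet ⟨β, m'⟩ := h ▸ mk_mem_toSet.mpr ⟨γ.2, rfl⟩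
    exact (mk_mem_toSet.mp hmem).2.symm
  rfl

end PartialChoice

variable [Fintype B]

lemma injOn_fst_and_ncard_iff {R : Set (Σ b, α b)} :
    Set.InjOn Sigma.fst R ∧ R.ncard + 1 = Nat.card B ↔ ∃ t : PartialChoice α, t.toSet = R := by
  constructor
  · rintro ⟨hinj, hcard⟩
    have hcompl : (Sigma.fst '' R)ᶜ.ncard = 1 := by
      have := Set.ncard_add_ncard_compl (Sigma.fst '' R)
      rw [hinj.ncard_image] at this
      omega
    obtain ⟨β, hβ⟩ := Set.ncard_eq_one.mp hcompl
    have hit : ∀ γ : {γ // γ ≠ β}, ∃ a, (⟨γ, a⟩ : Σ b, α b) ∈ R := by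
      intro γ
      have : (γ : B) ∈ Sigma.fst '' R := by
        by_contra h
        exact γ.2 (by simpa [hβ] using (show (γ : B) ∈ (Sigma.fst '' R)ᶜ from h))
      obtain ⟨⟨_, a⟩, ha, rfl⟩ := this
      exact ⟨a, ha⟩
    choose m hm using hit
    refine ⟨⟨β, m⟩, Set.Subset.antisymm (Set.range_subset_iff.mpr hm) ?_⟩
    rintro ⟨γ, a⟩ ha
    have hγ : γ ≠ β := by
      rintro rfl
      have : γ ∈ (Sigma.fst '' R)ᶜ := hβ ▸ rfl
      exact this ⟨_, ha, rfl⟩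
    exact ⟨⟨γ, hγ⟩, hinj (hm ⟨γ, hγ⟩) ha rfl⟩
  · rintro ⟨⟨β, m⟩, rfl⟩
    refine ⟨?_, ?_⟩
    · rintro _ ⟨γ, rfl⟩ _ ⟨γ', rfl⟩ h
      obtain rfl : γ = γ' := Subtype.ext h
      rfl
    · classical
      rw [PartialChoice.toSet, Set.ncard_range_of_injective, Nat.card_eq_fintype_card,
        Fintype.card_subtype_compl, Fintype.card_subtype_eq, Nat.card_eq_fintype_card]
      · have : 0 < Fintype.card B := Fintype.card_pos_iff.mpr ⟨β⟩
        omega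
      · intro γ γ' h
        exact Subtype.ext (congrArg Sigma.fst h)

lemma ncard_setOf_injOn_fst [DecidableEq B] [∀ b, Fintype (α b)] :
    {R : Set (Σ b, α b) | Set.InjOn Sigma.fst R ∧ R.ncard + 1 = Nat.card B}.ncard =
      ∑ β, ∏ γ ∈ Finset.univ.erase β, Fintype.card (α γ) := by
  have hset : {R : Set (Σ b, α b) | Set.InjOn Sigma.fst R ∧ R.ncard + 1 = Nat.card B} =
      Set.range PartialChoice.toSet :=
    Set.ext fun _ => injOn_fst_and_ncard_iff
  rw [hset, Set.ncard_range_of_injective PartialChoice.toSet_injective, Nat.card_eq_fintype_card,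
    Fintype.card_sigma]
  refine Finset.sum_congr rfl fun β _ => ?_
  rw [Fintype.card_pi]
  exact (Finset.prod_subtype _ (by simp) fun γ => Fintype.card (α γ)).symm

end PartialChoice

section Hinge

variable {n : ℕ} {k : Fin n → ℕ}

/-- Path `none` is the edge `uw`, path `some i` is `u, v_{i,1}, …, v_{i,k_i-2}, w`. -/
def pathLength (k : Fin n → ℕ) : Option (Fin n) → ℕ
  | none => 1
  | some i => k i - 1

/-- The `t`-th vertex of path `β`; past the end of the path it stays at `w`. -/
def pathVertex (k : Fin n → ℕ) : Option (Fin n) → ℕ → GHingeVertex n k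
  | none, t => if t = 0 then gu n k else gw n k
  | some i, t =>
    if t = 0 then gu n k else if h : t - 1 < k i - 2 then gv n k i ⟨t - 1, h⟩ else gw n k

abbrev HingeEdge (n : ℕ) (k : Fin n → ℕ) : Type := Σ β : Option (Fin n), Fin (pathLength k β)

def hingeEdge (e : HingeEdge n k) : Sym2 (GHingeVertex n k) :=
  s(pathVertex k e.1 e.2, pathVertex k e.1 (e.2 + 1))

lemma pathVertex_zero (β : Option (Fin n)) : pathVertex k β 0 = gu n k := by
  cases β <;> simp [pathVertex]

lemma pathVertex_some_succ (i : Fin n) (j : Fin (k i - 2)) :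
    pathVertex k (some i) (j + 1) = gv n k i j := by
  simp [pathVertex, j.isLt]

lemma pathVertex_eq_gu_iff {β : Option (Fin n)} {t : ℕ} : pathVertex k β t = gu n k ↔ t = 0 := by
  cases β <;> simp only [pathVertex] <;> split_ifs <;> simp_all [gu, gw, gv]

lemma pathVertex_eq_gw_iff (hk : ∀ i, 3 ≤ k i) {β : Option (Fin n)} {t : ℕ} :
    pathVertex k β t = gw n k ↔ pathLength k β ≤ t := by
  cases β with
  | none => simp only [pathVertex, pathLength]; split_ifs <;> simp [gu, gw] <;> omega
  | some i =>
    have := hk i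
    simp only [pathVertex, pathLength]; split_ifs <;> simp [gu, gw, gv] <;> omega

lemma pathVertex_eq_inr_iff {β : Option (Fin n)} {t : ℕ} {i : Fin n} {j : Fin (k i - 2)} :
    pathVertex k β t = Sum.inr ⟨i, j⟩ ↔ β = some i ∧ t = j + 1 := by
  cases β with
  | none => simp only [pathVertex]; split_ifs <;> simp [gu, gw]
  | some i' =>
    simp only [pathVertex]; split_ifs with h0 h1
    · simp only [gu, reduceCtorEq, Option.some.injEq, false_iff, not_and]; omega
    · simp only [gv, Sum.inr.injEq, Sigma.mk.inj_iff, Option.some.injEq]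
      constructor
      · rintro ⟨rfl, h⟩
        have := congrArg Fin.val (eq_of_heq h)
        exact ⟨rfl, by simp only at this; omega⟩
      · rintro ⟨rfl, rfl⟩
        exact ⟨rfl, heq_of_eq (Fin.ext (by simp))⟩
    · simp only [gw, reduceCtorEq, false_iff, not_and, Option.some.injEq]
      rintro rfl rfl
      exact h1 (by simp)

lemma pathVertex_eq_pathVertex_iff (hk : ∀ i, 3 ≤ k i) {β β' : Option (Fin n)} {t t' : ℕ} :
    pathVertex k β t = pathVertex k β' t' ↔
      (t = 0 ∧ t' = 0) ∨ (pathLength k β ≤ t ∧ pathLength k β' ≤ t') ∨ (β = β' ∧ t = t') := by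
  constructor
  · intro h
    rcases hx : pathVertex k β t with a | ⟨i, j⟩
    · fin_cases a
      · have hu : pathVertex k β t = gu n k := hx
        exact .inl ⟨pathVertex_eq_gu_iff.mp hu, pathVertex_eq_gu_iff.mp (h ▸ hu)⟩
      · have hw : pathVertex k β t = gw n k := hx
        exact .inr (.inl
          ⟨(pathVertex_eq_gw_iff hk).mp hw, (pathVertex_eq_gw_iff hk).mp (h ▸ hw)⟩)
    · obtain ⟨rfl, rfl⟩ := pathVertex_eq_inr_iff.mp hx
      obtain ⟨rfl, rfl⟩ := pathVertex_eq_inr_iff.mp (h ▸ hx)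
      exact .inr (.inr ⟨rfl, rfl⟩)
  · rintro (⟨rfl, rfl⟩ | ⟨h, h'⟩ | ⟨rfl, rfl⟩)
    · rw [pathVertex_zero, pathVertex_zero]
    · rw [(pathVertex_eq_gw_iff hk).mpr h, (pathVertex_eq_gw_iff hk).mpr h']
    · rfl

lemma pathLength_eq_one_iff (hk : ∀ i, 3 ≤ k i) {β : Option (Fin n)} :
    pathLength k β = 1 ↔ β = none := by
  cases β with
  | none => simp [pathLength]
  | some i => have := hk i; simp only [pathLength, reduceCtorEq, iff_false]; omega

lemma hingeEdge_injective (hk : ∀ i, 3 ≤ k i) : Function.Injective (hingeEdge (k := k)) := by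
  rintro ⟨β, j⟩ ⟨β', j'⟩ h
  have hj := j.isLt
  have hj' := j'.isLt
  simp only [hingeEdge, Sym2.eq_iff, pathVertex_eq_pathVertex_iff hk] at h
  obtain ⟨rfl, hjj⟩ : β = β' ∧ (j : ℕ) = j' := by
    rcases h with ⟨h₁ | h₁ | h₁, h₂ | h₂ | h₂⟩ | ⟨h₁ | h₁ | h₁, h₂ | h₂ | h₂⟩ <;> try omega
    · have hβ : pathLength k β = 1 := by omega
      have hβ' : pathLength k β' = 1 := by omega
      rw [pathLength_eq_one_iff hk] at hβ hβ'
      exact ⟨hβ.trans hβ'.symm, by omega⟩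
    · exact ⟨h₂.1, by omega⟩
  rw [Fin.ext hjj]

lemma gHinge_adj_pathVertex (hk : ∀ i, 3 ≤ k i) (e : HingeEdge n k) :
    (GHinge n k).Adj (pathVertex k e.1 e.2) (pathVertex k e.1 (e.2 + 1)) := by
  obtain ⟨β, j⟩ := e
  have hj := j.isLt
  refine (fromRel_adj _ _ _).mpr ⟨fun h => ?_, .inl ?_⟩
  · rw [pathVertex_eq_pathVertex_iff hk] at h
    omega
  cases β with
  | none => simp_all [pathVertex, pathLength, gu, gw, gHingeRelB]
  | some i =>
    simp only [pathLength] at hj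
    simp only [pathVertex]
    split_ifs <;> simp [gHingeRelB, gu, gv, gw] <;> omega

lemma mem_range_hingeEdge_of_gHingeRelB (hk : ∀ i, 3 ≤ k i) {x y : GHingeVertex n k}
    (h : gHingeRelB n k x y = true) : s(x, y) ∈ Set.range hingeEdge := by
  rcases x with a | ⟨i, j⟩ <;> rcases y with b | ⟨i', j'⟩
  · refine ⟨⟨none, ⟨0, by simp [pathLength]⟩⟩, ?_⟩
    fin_cases a <;> fin_cases b <;>
      simp_all [gHingeRelB, hingeEdge, pathVertex, gu, gw, Sym2.eq_swap]
  · simp only [gHingeRelB, Bool.and_eq_true, beq_iff_eq] at h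
    obtain ⟨rfl, hj⟩ := h
    refine ⟨⟨some i', ⟨0, by have := j'.isLt; simp only [pathLength]; omega⟩⟩, ?_⟩
    change s(pathVertex k (some i') 0, pathVertex k (some i') (0 + 1)) = _
    rw [pathVertex_zero, ← hj, pathVertex_some_succ]
    rfl
  · simp only [gHingeRelB, Bool.and_eq_true, beq_iff_eq] at h
    obtain ⟨rfl, hj⟩ := h
    have := hk i
    refine ⟨⟨some i, ⟨j + 1, by simp only [pathLength]; omega⟩⟩, ?_⟩
    change s(pathVertex k (some i) (j + 1), pathVertex k (some i) (j + 1 + 1)) = _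
    rw [pathVertex_some_succ, (pathVertex_eq_gw_iff hk).mpr (by simp only [pathLength]; omega)]
    rfl
  · simp only [gHingeRelB, Bool.and_eq_true, beq_iff_eq] at h
    obtain ⟨rfl, hj⟩ := h
    refine ⟨⟨some i, ⟨j + 1, by have := j'.isLt; simp only [pathLength]; omega⟩⟩, ?_⟩
    change s(pathVertex k (some i) (j + 1), pathVertex k (some i) (j + 1 + 1)) = _
    rw [pathVertex_some_succ, show (j : ℕ) + 1 + 1 = j' + 1 by omega, pathVertex_some_succ]
    rfl

lemma range_hingeEdge (hk : ∀ i, 3 ≤ k i) : Set.range hingeEdge = (GHinge n k).edgeSet := by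
  ext e
  induction e using Sym2.ind with
  | _ x y =>
  constructor
  · rintro ⟨e, he⟩
    rw [← he]
    exact gHinge_adj_pathVertex hk e
  · rintro ⟨-, h | h⟩
    · exact mem_range_hingeEdge_of_gHingeRelB hk h
    · rw [Sym2.eq_swap]
      exact mem_range_hingeEdge_of_gHingeRelB hk h

lemma exists_pathVertex_eq (x : GHingeVertex n k) :
    ∃ β t, t ≤ pathLength k β ∧ pathVertex k β t = x := by
  rcases x with a | ⟨i, j⟩
  · fin_cases a
    · exact ⟨none, 0, by simp [pathLength], rfl⟩
    · exact ⟨none, 1, le_rfl, rfl⟩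
  · exact ⟨some i, j + 1, by have := j.isLt; simp only [pathLength]; omega,
      pathVertex_some_succ i j⟩

lemma card_hingeEdge_add_one (hk : ∀ i, 3 ≤ k i) :
    Nat.card (HingeEdge n k) + 1 = Nat.card (GHingeVertex n k) + n := by
  have hsum : ∑ i, (k i - 1) = ∑ i, (k i - 2) + n := by
    rw [Finset.sum_congr rfl fun i _ => (by have := hk i; omega : k i - 1 = k i - 2 + 1),
      Finset.sum_add_distrib]
    simp
  have hE : Nat.card (HingeEdge n k) = 1 + ∑ i, (k i - 1) := by
    rw [Nat.card_eq_fintype_card, Fintype.card_sigma]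
    simp only [Fintype.card_fin, Fintype.sum_option]
    rfl
  rw [hE, hsum, Nat.card_eq_fintype_card, Fintype.card_sum, Fintype.card_sigma]
  simp only [Fintype.card_fin]
  omega

lemma reachable_pathVertex (hk : ∀ i, 3 ≤ k i) {R : Set (HingeEdge n k)} {β : Option (Fin n)}
    {a c : ℕ} (hac : a ≤ c) (hc : c ≤ pathLength k β)
    (hR : ∀ j : Fin (pathLength k β), a ≤ j → (j : ℕ) < c → ⟨β, j⟩ ∉ R) :
    (fromEdgeSet (hingeEdge '' Rᶜ)).Reachable (pathVertex k β a) (pathVertex k β c) := by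
  induction c, hac using Nat.le_induction with
  | base => rfl
  | succ c hac ih =>
    refine (ih (by omega) fun j h₁ h₂ => hR j h₁ (by omega)).trans (Adj.reachable ?_)
    refine (fromEdgeSet_adj _).mpr ⟨⟨⟨β, ⟨c, by omega⟩⟩, hR _ hac (by simp), rfl⟩, fun h => ?_⟩
    rw [pathVertex_eq_pathVertex_iff hk] at h
    omega

lemma connected_of_injOn_fst (hk : ∀ i, 3 ≤ k i) {R : Set (HingeEdge n k)}
    (hinj : Set.InjOn Sigma.fst R) {β₀ : Option (Fin n)} (hβ₀ : ∀ j, ⟨β₀, j⟩ ∉ R) :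
    (fromEdgeSet (hingeEdge '' Rᶜ)).Connected := by
  have huw : (fromEdgeSet (hingeEdge '' Rᶜ)).Reachable (gu n k) (gw n k) := by
    have := reachable_pathVertex hk (R := R) (Nat.zero_le _) le_rfl fun j _ _ => hβ₀ j
    rwa [pathVertex_zero, (pathVertex_eq_gw_iff hk).mpr le_rfl] at this
  refine (connected_iff_exists_forall_reachable _).mpr ⟨gu n k, fun x => ?_⟩
  obtain ⟨β, t, ht, rfl⟩ := exists_pathVertex_eq x
  by_cases h : ∀ j : Fin (pathLength k β), (j : ℕ) < t → ⟨β, j⟩ ∉ R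
  · rw [← pathVertex_zero β]
    exact reachable_pathVertex hk (Nat.zero_le _) ht fun j _ hj => h j hj
  · -- path `β` has lost an edge before position `t`, hence none after it: go on to `w`
    push Not at h
    obtain ⟨j, hjt, hj⟩ := h
    have hafter : ∀ j' : Fin (pathLength k β), t ≤ j' → ⟨β, j'⟩ ∉ R := fun j' hj' hj'R => by
      have := congrArg (fun e : HingeEdge n k => (e.2 : ℕ)) (hinj hj hj'R rfl)
      simp only at this
      omega
    have := reachable_pathVertex hk ht le_rfl fun j' hj' _ => hafter j' hj'
    rw [(pathVertex_eq_gw_iff hk).mpr le_rfl] at this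
    exact huw.trans this.symm

lemma not_reachable_of_mem_of_mem (hk : ∀ i, 3 ≤ k i) {R : Set (HingeEdge n k)}
    {β : Option (Fin n)} {j j' : Fin (pathLength k β)} (hj : ⟨β, j⟩ ∈ R) (hj' : ⟨β, j'⟩ ∈ R)
    (hlt : j < j') :
    ¬(fromEdgeSet (hingeEdge '' Rᶜ)).Reachable (pathVertex k β j') (gu n k) := by
  -- the vertices strictly between the two deleted edges are cut off from the rest
  let S := {x | ∃ t, (j : ℕ) < t ∧ t ≤ j' ∧ pathVertex k β t = x}
  have hS : ∀ x ∈ S, ∀ y, (fromEdgeSet (hingeEdge '' Rᶜ)).Adj x y → y ∈ S := by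
    rintro _ ⟨t, hjt, htj', rfl⟩ y hy
    obtain ⟨⟨⟨β', l⟩, hl, he⟩, -⟩ := (fromEdgeSet_adj _).mp hy
    have := l.isLt
    have := j'.isLt
    simp only [hingeEdge, Sym2.eq_iff, pathVertex_eq_pathVertex_iff hk] at he
    rcases he with ⟨h₁ | h₁ | ⟨rfl, rfl⟩, rfl⟩ | ⟨rfl, h₁ | h₁ | ⟨rfl, h₁⟩⟩
    · omega
    · omega
    · have : (l : ℕ) ≠ j' := fun h => hl (Fin.ext h ▸ hj')
      exact ⟨l + 1, by omega, by omega, rfl⟩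
    · omega
    · omega
    · have : (l : ℕ) ≠ j := fun h => hl (Fin.ext h ▸ hj)
      exact ⟨l, by omega, by omega, rfl⟩
  intro h
  obtain ⟨t, hjt, -, ht⟩ := h.mem_of_forall_adj_mem hS ⟨j', hlt, le_rfl, rfl⟩
  exact absurd (pathVertex_eq_gu_iff.mp ht) (by omega)

lemma injOn_fst_of_connected (hk : ∀ i, 3 ≤ k i) {R : Set (HingeEdge n k)}
    (h : (fromEdgeSet (hingeEdge '' Rᶜ)).Connected) : Set.InjOn Sigma.fst R := by
  rintro ⟨β, j⟩ hj ⟨β', j'⟩ hj' (rfl : β = β')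
  rcases lt_trichotomy j j' with hlt | rfl | hlt
  · exact absurd (h.preconnected _ _) (not_reachable_of_mem_of_mem hk hj hj' hlt)
  · rfl
  · exact absurd (h.preconnected _ _) (not_reachable_of_mem_of_mem hk hj' hj hlt)

lemma isTree_fromEdgeSet_hingeEdge_iff (hk : ∀ i, 3 ≤ k i) {R : Set (HingeEdge n k)} :
    (fromEdgeSet (hingeEdge '' Rᶜ)).IsTree ↔
      Set.InjOn Sigma.fst R ∧ R.ncard + 1 = Nat.card (Option (Fin n)) := by
  have hcard := card_hingeEdge_add_one hk
  have hR := Set.ncard_add_ncard_compl R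
  rw [isTree_fromEdgeSet_iff (G := GHinge n k) (range_hingeEdge hk ▸ Set.image_subset_range _ _),
    Set.ncard_image_of_injective _ (hingeEdge_injective hk)]
  have hB : Nat.card (Option (Fin n)) = n + 1 := by simp
  constructor
  · rintro ⟨hconn, hs⟩
    exact ⟨injOn_fst_of_connected hk hconn, by omega⟩
  · rintro ⟨hinj, hs⟩
    obtain ⟨⟨β, m⟩, rfl⟩ := injOn_fst_and_ncard_iff.mp ⟨hinj, hs⟩
    exact ⟨connected_of_injOn_fst hk hinj fun j h => (PartialChoice.mk_mem_toSet.mp h).1 rfl,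
      by omega⟩

lemma spanningTreeCount_gHinge (hk : ∀ i, 3 ≤ k i) :
    spanningTreeCount (GHinge n k) = ∑ β, ∏ γ ∈ Finset.univ.erase β, pathLength k γ := by
  have hrange := range_hingeEdge hk
  have htrees : {s | s ⊆ (GHinge n k).edgeSet ∧ (fromEdgeSet s).IsTree} =
      (fun R => hingeEdge '' Rᶜ) ''
        {R | Set.InjOn Sigma.fst R ∧ R.ncard + 1 = Nat.card (Option (Fin n))} := by
    ext s
    constructor
    · rintro ⟨hs, htree⟩
      have hs' : hingeEdge '' (hingeEdge ⁻¹' s)ᶜᶜ = s := by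
        rw [compl_compl, Set.image_preimage_eq_of_subset (hrange ▸ hs)]
      rw [← hs'] at htree
      exact ⟨_, (isTree_fromEdgeSet_hingeEdge_iff hk).mp htree, hs'⟩
    · rintro ⟨R, hR, rfl⟩
      exact ⟨hrange ▸ Set.image_subset_range _ _, (isTree_fromEdgeSet_hingeEdge_iff hk).mpr hR⟩
  have hinj : Function.Injective fun R : Set (HingeEdge n k) => hingeEdge '' Rᶜ :=
    (Set.image_injective.mpr (hingeEdge_injective hk)).comp compl_injective
  rw [spanningTreeCount, htrees, Set.ncard_image_of_injective _ hinj, ncard_setOf_injOn_fst]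
  simp only [Fintype.card_fin]

lemma sum_prod_erase_pathLength (hk : ∀ i, 3 ≤ k i) :
    ∑ β, ∏ γ ∈ Finset.univ.erase β, pathLength k γ =
      (∏ i, (k i - 1)) + ∑ i, ∏ j ∈ Finset.univ.erase i, (k j - 1) := by
  have hprod : ∏ γ, pathLength k γ = ∏ i, (k i - 1) := by
    simp [Fintype.prod_option, pathLength]
  rw [Fintype.sum_option]
  congr 1
  · rw [← hprod, ← Finset.prod_erase_mul _ _ (Finset.mem_univ none)]
    simp [pathLength]
  · refine Finset.sum_congr rfl fun i _ => ?_
    have := hk i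
    refine Nat.eq_of_mul_eq_mul_right (m := k i - 1) (by omega) ?_
    rw [Finset.prod_erase_mul _ (fun j => k j - 1) (Finset.mem_univ i), ← hprod]
    exact Finset.prod_erase_mul _ _ (Finset.mem_univ (some i))

end Hinge

theorem gHinge_spanningTreeCount_general (n : ℕ) (k : Fin n → ℕ) (hk : ∀ i, 3 ≤ k i) :
    spanningTreeCount (GHinge n k) =
      (∏ i, (k i - 1)) + ∑ i, ∏ j ∈ Finset.univ.erase i, (k j - 1) := by
  rw [spanningTreeCount_gHinge hk, sum_prod_erase_pathLength hk]

/-- For `n ≥ 2` and `k₁, …, kₙ ≥ 3`, the number of spanning trees of the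
hinge graph `H_{k₁-1,…,kₙ-1}` equals `∏ i (k_i-1) + ∑ i ∏_{j ≠ i} (k_j-1)`. -/
theorem gHinge_spanningTreeCount (n : ℕ) (hn : 2 ≤ n) (k : Fin n → ℕ) (hk : ∀ i, 3 ≤ k i) :
    spanningTreeCount (GHinge n k) =
      (∏ i, (k i - 1)) + ∑ i, ∏ j ∈ Finset.univ.erase i, (k j - 1) :=
  gHinge_spanningTreeCount_general n k hk
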